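/- arXiv:1708.05330 — 2 statements merged into one kernel-verified Lean document; each statement's English description precedes it below -/
import Mathlib

section
/- In a ternary quasigroup (X, T, L, M, R) with T = M, the left division satisfies cabL = acbL for all a, b, c ∈ X. -/
/-- In a ternary quasigroup `(X, T, L, M, R)` with `T = M`,
the left division satisfies `cabL = acbL` for all `a b c`. -/
theorem left_division_swap_of_T_eq_M
    {X : Type*} (T L M R : X → X → X → X)
    (hq1 : ∀ x1 x2 x3 : X, L (T x1 x2 x3) x2 x3 = x1)
    (hq2 : ∀ x1 x2 x3 : X, T (L x1 x2 x3) x2 x3 = x1)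
    (hq3 : ∀ x1 x2 x3 : X, M x1 (T x1 x2 x3) x3 = x2)
    (hq4 : ∀ x1 x2 x3 : X, T x1 (M x1 x2 x3) x3 = x2)
    (hq5 : ∀ x1 x2 x3 : X, R x1 x2 (T x1 x2 x3) = x3)
    (hq6 : ∀ x1 x2 x3 : X, T x1 x2 (R x1 x2 x3) = x3)
    (hTM : T = M) :
    ∀ a b c : X, L c a b = L a c b := by
  intro a b c
  have key : T (L c a b) c b = a := by
    have h := hq3 (L c a b) a b
    rw [hq2, ← hTM] at h
    exact h
  calc L c a b = L (T (L c a b) c b) c b := (hq1 _ _ _).symm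
    _ = L a c b := by rw [key]
end

section
/- In a ternary quasigroup (X, T, L, M, R) with T = M, the right division satisfies bcaR = bacR for all a, b, c ∈ X. -/
/-- In a ternary quasigroup `(X, T, L, M, R)` with `T = M`,
the right division satisfies `bcaR = bacR` for all `a b c`. -/
theorem right_division_swap_of_T_eq_M
    {X : Type*} (T L M R : X → X → X → X)
    (hq1 : ∀ x1 x2 x3 : X, L (T x1 x2 x3) x2 x3 = x1)
    (hq2 : ∀ x1 x2 x3 : X, T (L x1 x2 x3) x2 x3 = x1)
    (hq3 : ∀ x1 x2 x3 : X, M x1 (T x1 x2 x3) x3 = x2)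
    (hq4 : ∀ x1 x2 x3 : X, T x1 (M x1 x2 x3) x3 = x2)
    (hq5 : ∀ x1 x2 x3 : X, R x1 x2 (T x1 x2 x3) = x3)
    (hq6 : ∀ x1 x2 x3 : X, T x1 x2 (R x1 x2 x3) = x3)
    (hTM : T = M) :
    ∀ a b c : X, R b c a = R b a c := by
  intro a b c
  subst hTM
  have h1 : T b a (R b c a) = c := by
    have := hq3 b c (R b c a)
    rwa [hq6 b c a] at this
  calc R b c a = R b a (T b a (R b c a)) := (hq5 b a _).symm
    _ = R b a c := by rw [h1]
end
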